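/- arXiv:1211.0894 — 4 statements merged into one kernel-verified Lean document; each statement's English description precedes it below -/
import Mathlib

section
/- Maximum principle with mixed boundary conditions: Let λ > 0, T > 0, s ∈ C¹([0,T]) with s(t) > 0, and let u be continuous on D̄_T = {(x,t) : 0 ≤ x ≤ s(t), 0 ≤ t ≤ T}, with u_x, u_{xx} continuous for 0 < x ≤ s(t), 0 < t ≤ T, and u_t continuous for 0 < x < s(t), 0 < t < T. Suppose −u_t + u_{xx} − λu ≥ 0 on the interior and u_x(s(t),t) ≤ 0 for 0 ≤ t ≤ T. If M := max_{D̄_T} u > 0, then u attains its maximum M only at points of the parabolic boundary portion {(0,t) : t ∈ [0,T]} ∪ {(x,0) : x ∈ [0,s(0)]}. -/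
/-!
Suppose the maximum `M > 0` is attained at `(x₀, t₀)` with `x₀, t₀ > 0`. On the slice `t = t₀`
the point `x₀` is a maximum from the left, and at `x₀ = s t₀` the Neumann condition bounds `u_x`
from the other side, so `u_x = 0` and `u_xx ≤ 0` there. Then `u_xx - λu ≤ -λM < 0` at `(x₀, t₀)`,
and by continuity the differential inequality makes `u_t < -λM/2` nearby. Going back in time
along a vertical segment `x = x₀ - Lδ`, `t ∈ [t₀ - δ, t₀]` thus gains at least `λMδ/2`. Since `s`
is `C¹`, with `L` large the segment stays in the domain, and since `u_x(x₀, t₀) = 0` the loss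
from stepping left by `Lδ` is `o(δ)`, so `u(x₀ - Lδ, t₀ - δ) > M` for small `δ`.
-/

open Set Filter Topology

theorem HasDerivWithinAt.eventually_sub_mul_lt {f : ℝ → ℝ} {f' L a : ℝ}
    (hf : HasDerivWithinAt f f' (Iio a) a) (hL : f' < L) :
    ∀ᶠ y in 𝓝[<] a, f a - L * (a - y) < f y := by
  filter_upwards [hf.limsup_slope_le' (lt_irrefl a) hL, self_mem_nhdsWithin] with y hslope hy
  rw [slope_def_field, div_lt_iff_of_neg (sub_neg.2 hy)] at hslope
  linarith

theorem IsLocalMaxOn.hasDerivWithinAt_Iio_nonneg {f : ℝ → ℝ} {f' a : ℝ}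
    (hmax : IsLocalMaxOn f (Iio a) a) (hf : HasDerivWithinAt f f' (Iio a) a) : 0 ≤ f' := by
  by_contra! hneg
  obtain ⟨y, hgt, hle⟩ := ((hf.eventually_sub_mul_lt hneg).and hmax).exists
  linarith

theorem sub_lt_mul_sub_of_hasDerivAt_lt {g g' : ℝ → ℝ} {a b C : ℝ} (hab : a < b)
    (hg : ContinuousOn g (Icc a b)) (hg' : ∀ τ ∈ Ioo a b, HasDerivAt g (g' τ) τ)
    (hlt : ∀ τ ∈ Ioo a b, g' τ < C) : g b - g a < C * (b - a) := by
  obtain ⟨ξ, hξ, hslope⟩ := exists_hasDerivAt_eq_slope g g' hab hg hg'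
  rw [← div_lt_iff₀ (sub_pos.2 hab), ← hslope]
  exact hlt ξ hξ

theorem hasDerivAt_deriv_nonpos_of_isLocalMaxOn_Iio {f f' : ℝ → ℝ} {a d : ℝ}
    (hmax : IsLocalMaxOn f (Iio a) a) (hf : ∀ᶠ y in 𝓝[≤] a, HasDerivAt f (f' y) y)
    (hf'a : f' a = 0) (hf' : HasDerivAt f' d a) : d ≤ 0 := by
  by_contra! hd
  have hf'_neg : ∀ᶠ y in 𝓝[<] a, f' y < 0 := by
    filter_upwards [hf'.neg.hasDerivWithinAt.eventually_sub_mul_lt (neg_neg_of_pos hd)]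
      with y hy
    simp only [Pi.neg_apply, hf'a, zero_mul, sub_zero] at hy
    linarith
  obtain ⟨l₁, hl₁, hderiv⟩ := mem_nhdsLE_iff_exists_Ioc_subset.1 hf
  obtain ⟨l₂, hl₂, hsub⟩ := mem_nhdsLT_iff_exists_Ioo_subset.1 (hmax.and hf'_neg)
  set c := (max l₁ l₂ + a) / 2
  have hl : max l₁ l₂ < a := max_lt hl₁ hl₂
  have hlc : max l₁ l₂ < c := by simp only [c]; linarith
  have hca : c < a := by simp only [c]; linarith
  have hcont : ContinuousOn f (Icc c a) := fun y hy =>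
    (hderiv ⟨(le_max_left _ _).trans_lt (hlc.trans_le hy.1), hy.2⟩).continuousAt.continuousWithinAt
  have hdrop := sub_lt_mul_sub_of_hasDerivAt_lt hca hcont
    (fun y hy => hderiv ⟨(le_max_left _ _).trans_lt (hlc.trans hy.1), hy.2.le⟩)
    (fun y hy => (hsub ⟨(le_max_right _ _).trans_lt (hlc.trans hy.1), hy.2⟩).2)
  have hfc := (hsub ⟨(le_max_right _ _).trans_lt hlc, hca⟩).1
  linarith

theorem DifferentiableWithinAt.exists_pos_eventually_sub_mul_le {f : ℝ → ℝ} {a : ℝ}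
    (hf : DifferentiableWithinAt ℝ f (Iio a) a) :
    ∃ L > 0, ∀ᶠ y in 𝓝[≤] a, f a - L * (a - y) ≤ f y := by
  refine ⟨|derivWithin f (Iio a) a| + 1, by positivity, ?_⟩
  rw [← Iio_insert, nhdsWithin_insert, eventually_sup, eventually_pure]
  refine ⟨by simp, ?_⟩
  filter_upwards [hf.hasDerivWithinAt.eventually_sub_mul_lt
    ((le_abs_self _).trans_lt (lt_add_one _))] with y hy using hy.le

theorem eventually_forall_Icc_of_nhdsLE {a : ℝ} {R : ℝ → Prop} (h : ∀ᶠ τ in 𝓝[≤] a, R τ) :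
    ∀ᶠ δ in 𝓝[>] 0, ∀ τ ∈ Icc (a - δ) a, R τ := by
  obtain ⟨l, hl, hsub⟩ := mem_nhdsLE_iff_exists_Ioc_subset.1 h
  filter_upwards [Ioo_mem_nhdsGT (sub_pos.2 hl)] with δ hδ τ hτ
  exact hsub ⟨by linarith [hδ.2, hτ.1], hτ.2⟩

theorem tendsto_sub_mul_nhdsGT_zero {a L : ℝ} (hL : 0 < L) :
    Tendsto (fun δ => a - L * δ) (𝓝[>] 0) (𝓝[<] a) := by
  refine tendsto_nhdsWithin_of_tendsto_nhds_of_eventually_within _ ?_ ?_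
  · have : Continuous fun δ : ℝ => a - L * δ := by fun_prop
    simpa using (this.tendsto 0).mono_left nhdsWithin_le_nhds
  · filter_upwards [self_mem_nhdsWithin] with δ (hδ : 0 < δ)
    simpa using mul_pos hL hδ

theorem exists_segment_of_eventually_prod {x₀ t₀ L : ℝ} (hL : 0 < L) {P : ℝ × ℝ → Prop}
    (hP : ∀ᶠ p in 𝓝[<] x₀ ×ˢ 𝓝[≤] t₀, P p) :
    ∃ δ > 0, ∀ τ ∈ Icc (t₀ - δ) t₀, P (x₀ - L * δ, τ) := by
  obtain ⟨px, hpx, pt, hpt, hP⟩ := eventually_prod_iff.1 hP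
  obtain ⟨δ, hδ, hx, ht⟩ := ((eventually_mem_nhdsWithin (s := Ioi 0)).and
    (((tendsto_sub_mul_nhdsGT_zero hL).eventually hpx).and
    (eventually_forall_Icc_of_nhdsLE hpt))).exists
  exact ⟨δ, hδ, fun τ hτ => hP hx (ht τ hτ)⟩

theorem eventually_ut_lt_of_uxx_sub_lt {s : ℝ → ℝ} {u uxx ut : ℝ → ℝ → ℝ} {T lam c x₀ t₀ : ℝ}
    (hx₀ : 0 < x₀) (hx₀s : x₀ ≤ s t₀) (ht₀ : 0 < t₀) (ht₀T : t₀ ≤ T)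
    (hu_cont : ContinuousOn (fun p : ℝ × ℝ => u p.1 p.2)
      {p : ℝ × ℝ | 0 ≤ p.1 ∧ p.1 ≤ s p.2 ∧ 0 ≤ p.2 ∧ p.2 ≤ T})
    (huxx_cont : ContinuousOn (fun p : ℝ × ℝ => uxx p.1 p.2)
      {p : ℝ × ℝ | 0 < p.1 ∧ p.1 ≤ s p.2 ∧ 0 < p.2 ∧ p.2 ≤ T})
    (hineq : ∀ t ∈ Ioo 0 T, ∀ x ∈ Ioo 0 (s t), 0 ≤ -ut x t + uxx x t - lam * u x t)
    (h₀ : uxx x₀ t₀ - lam * u x₀ t₀ < -c) :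
    ∀ᶠ p in 𝓝 (x₀, t₀), 0 < p.1 ∧ 0 < p.2 ∧ (p.1 < s p.2 → p.2 < T → ut p.1 p.2 < -c) := by
  set D := {p : ℝ × ℝ | 0 < p.1 ∧ p.1 ≤ s p.2 ∧ 0 < p.2 ∧ p.2 ≤ T}
  have hmem : (x₀, t₀) ∈ D := ⟨hx₀, hx₀s, ht₀, ht₀T⟩
  have hF : ContinuousWithinAt (fun p : ℝ × ℝ => uxx p.1 p.2 - lam * u p.1 p.2) D (x₀, t₀) :=
    (huxx_cont _ hmem).sub (continuousWithinAt_const.mul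
      (hu_cont.mono (fun p hp => ⟨hp.1.le, hp.2.1, hp.2.2.1.le, hp.2.2.2⟩) _ hmem))
  filter_upwards [eventually_nhdsWithin_iff.1 (hF.eventually (eventually_lt_nhds h₀)),
    (continuous_fst.tendsto _).eventually (eventually_gt_nhds hx₀),
    (continuous_snd.tendsto _).eventually (eventually_gt_nhds ht₀)] with p hp hp₁ hp₂
  refine ⟨hp₁, hp₂, fun hps hpT => ?_⟩
  linarith [hp ⟨hp₁, hps.le, hp₂, hpT.le⟩, hineq p.2 ⟨hp₂, hpT⟩ p.1 ⟨hp₁, hps⟩]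

theorem exists_lt_on_backward_segment {s : ℝ → ℝ} {u ut : ℝ → ℝ → ℝ} {T c L x₀ t₀ : ℝ}
    (hL : 0 < L) (hx₀s : x₀ ≤ s t₀) (ht₀T : t₀ ≤ T)
    (hu_cont : ContinuousOn (fun p : ℝ × ℝ => u p.1 p.2)
      {p : ℝ × ℝ | 0 ≤ p.1 ∧ p.1 ≤ s p.2 ∧ 0 ≤ p.2 ∧ p.2 ≤ T})
    (hut : ∀ t ∈ Ioo 0 T, ∀ x ∈ Ioo 0 (s t), HasDerivAt (fun τ => u x τ) (ut x t) t)
    (hs_lower : ∀ᶠ τ in 𝓝[≤] t₀, s t₀ - L * (t₀ - τ) ≤ s τ)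
    (hflat : ∀ᶠ y in 𝓝[<] x₀, u x₀ t₀ - c / L * (x₀ - y) < u y t₀)
    (hut_neg : ∀ᶠ p in 𝓝 (x₀, t₀),
      0 < p.1 ∧ 0 < p.2 ∧ (p.1 < s p.2 → p.2 < T → ut p.1 p.2 < -c)) :
    ∃ x t, 0 ≤ x ∧ x ≤ s t ∧ 0 ≤ t ∧ t ≤ T ∧ u x₀ t₀ < u x t := by
  have hnhds : 𝓝[<] x₀ ×ˢ 𝓝[≤] t₀ ≤ 𝓝 (x₀, t₀) := by
    rw [nhds_prod_eq]; exact prod_mono nhdsWithin_le_nhds nhdsWithin_le_nhds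
  obtain ⟨δ, hδ, hseg⟩ := exists_segment_of_eventually_prod hL
    ((hflat.prod_inl _).and ((hs_lower.prod_inr _).and (hut_neg.filter_mono hnhds)))
  set x₁ := x₀ - L * δ
  have ht₀δ : t₀ - δ < t₀ := by linarith
  have hx₁_le : ∀ τ ∈ Icc (t₀ - δ) t₀, x₁ ≤ s τ := fun τ hτ => by
    nlinarith [(hseg τ hτ).2.1, hτ.1]
  have hx₁_lt : ∀ τ ∈ Ioo (t₀ - δ) t₀, x₁ < s τ := fun τ hτ => by
    nlinarith [(hseg τ ⟨hτ.1.le, hτ.2.le⟩).2.1, hτ.1]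
  have hx₁ : 0 < x₁ := (hseg t₀ ⟨ht₀δ.le, le_rfl⟩).2.2.1
  have ht₁ : 0 < t₀ - δ := (hseg (t₀ - δ) ⟨le_rfl, ht₀δ.le⟩).2.2.2.1
  have hstep : u x₀ t₀ - c * δ < u x₁ t₀ := by
    have := (hseg t₀ ⟨ht₀δ.le, le_rfl⟩).1
    rwa [show c / L * (x₀ - x₁) = c * δ by field_simp; ring] at this
  have hcont : ContinuousOn (fun τ => u x₁ τ) (Icc (t₀ - δ) t₀) :=
    hu_cont.comp (continuous_const.prodMk continuous_id).continuousOn fun τ hτ =>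
      ⟨hx₁.le, hx₁_le τ hτ, ht₁.le.trans hτ.1, hτ.2.trans ht₀T⟩
  have hdescent := sub_lt_mul_sub_of_hasDerivAt_lt (C := -c) ht₀δ hcont
    (fun τ hτ => hut τ ⟨ht₁.trans hτ.1, hτ.2.trans_le ht₀T⟩ x₁ ⟨hx₁, hx₁_lt τ hτ⟩)
    (fun τ hτ => (hseg τ ⟨hτ.1.le, hτ.2.le⟩).2.2.2.2 (hx₁_lt τ hτ) (hτ.2.trans_le ht₀T))
  exact ⟨x₁, t₀ - δ, hx₁.le, hx₁_le _ ⟨le_rfl, ht₀δ.le⟩, ht₁.le, ht₀δ.le.trans ht₀T,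
    by linarith⟩

theorem stmt_5_general (lam T M : ℝ) (s : ℝ → ℝ) (u ux uxx ut : ℝ → ℝ → ℝ)
    (hlam : 0 < lam)
    (hs : ContDiffOn ℝ 1 s (Set.Icc 0 T))
    (hu_cont : ContinuousOn (fun p : ℝ × ℝ => u p.1 p.2)
      {p : ℝ × ℝ | 0 ≤ p.1 ∧ p.1 ≤ s p.2 ∧ 0 ≤ p.2 ∧ p.2 ≤ T})
    (hux : ∀ t ∈ Set.Ioc (0:ℝ) T, ∀ x ∈ Set.Ioc (0:ℝ) (s t),
      HasDerivAt (fun y => u y t) (ux x t) x)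
    (huxx : ∀ t ∈ Set.Ioc (0:ℝ) T, ∀ x ∈ Set.Ioc (0:ℝ) (s t),
      HasDerivAt (fun y => ux y t) (uxx x t) x)
    (huxx_cont : ContinuousOn (fun p : ℝ × ℝ => uxx p.1 p.2)
      {p : ℝ × ℝ | 0 < p.1 ∧ p.1 ≤ s p.2 ∧ 0 < p.2 ∧ p.2 ≤ T})
    (hut : ∀ t ∈ Set.Ioo (0:ℝ) T, ∀ x ∈ Set.Ioo (0:ℝ) (s t),
      HasDerivAt (fun τ => u x τ) (ut x t) t)
    (hineq : ∀ t ∈ Set.Ioo (0:ℝ) T, ∀ x ∈ Set.Ioo (0:ℝ) (s t),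
      0 ≤ -ut x t + uxx x t - lam * u x t)
    (hNeu : ∀ t ∈ Set.Icc (0:ℝ) T, ux (s t) t ≤ 0)
    (hMub : ∀ x t : ℝ, 0 ≤ x → x ≤ s t → 0 ≤ t → t ≤ T → u x t ≤ M)
    (hMpos : 0 < M) :
    ∀ x t : ℝ, 0 ≤ x → x ≤ s t → 0 ≤ t → t ≤ T → u x t = M → x = 0 ∨ t = 0 := by
  intro x₀ t₀ hx₀ hx₀s ht₀ ht₀T hmax
  by_contra! hne
  replace hx₀ : 0 < x₀ := hx₀.lt_of_ne' hne.1
  replace ht₀ : 0 < t₀ := ht₀.lt_of_ne' hne.2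
  have hslice : ∀ y ∈ Icc 0 (s t₀), u y t₀ ≤ u x₀ t₀ := fun y hy =>
    hmax ▸ hMub y t₀ hy.1 hy.2 ht₀.le ht₀T
  have hslice_left : IsLocalMaxOn (fun y => u y t₀) (Iio x₀) x₀ :=
    mem_of_superset (Ioo_mem_nhdsLT hx₀) fun y hy => hslice y ⟨hy.1.le, hy.2.le.trans hx₀s⟩
  have hux_at := hux t₀ ⟨ht₀, ht₀T⟩ x₀ ⟨hx₀, hx₀s⟩
  have hux₀ : ux x₀ t₀ = 0 := by
    rcases hx₀s.lt_or_eq with hlt | rfl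
    · refine IsLocalMax.hasDerivAt_eq_zero ?_ hux_at
      exact mem_of_superset (Ioo_mem_nhds hx₀ hlt) fun y hy => hslice y ⟨hy.1.le, hy.2.le⟩
    · exact le_antisymm (hNeu t₀ ⟨ht₀.le, ht₀T⟩)
        (hslice_left.hasDerivWithinAt_Iio_nonneg hux_at.hasDerivWithinAt)
  have huxx₀ : uxx x₀ t₀ ≤ 0 :=
    hasDerivAt_deriv_nonpos_of_isLocalMaxOn_Iio hslice_left
      (mem_of_superset (Ioc_mem_nhdsLE hx₀) fun y hy =>
        hux t₀ ⟨ht₀, ht₀T⟩ y ⟨hy.1, hy.2.trans hx₀s⟩)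
      hux₀ (huxx t₀ ⟨ht₀, ht₀T⟩ x₀ ⟨hx₀, hx₀s⟩)
  have hut_neg := eventually_ut_lt_of_uxx_sub_lt hx₀ hx₀s ht₀ ht₀T hu_cont huxx_cont hineq
    (show uxx x₀ t₀ - lam * u x₀ t₀ < -(lam * M / 2) by rw [hmax]; nlinarith)
  obtain ⟨L, hL, hs_lower⟩ := DifferentiableWithinAt.exists_pos_eventually_sub_mul_le
    ((hs.differentiableOn one_ne_zero t₀ ⟨ht₀.le, ht₀T⟩).mono_of_mem_nhdsWithin
      (mem_of_superset (Ioo_mem_nhdsLT ht₀)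
        (Ioo_subset_Icc_self.trans (Icc_subset_Icc_right ht₀T))))
  have hflat := hux_at.hasDerivWithinAt.eventually_sub_mul_lt
    (show ux x₀ t₀ < lam * M / 2 / L by rw [hux₀]; positivity)
  obtain ⟨x, t, hx, hxs, ht, htT, hlt⟩ :=
    exists_lt_on_backward_segment hL hx₀s ht₀T hu_cont hut hs_lower hflat hut_neg
  linarith [hMub x t hx hxs ht htT]

theorem stmt_5 (lam T M : ℝ) (s : ℝ → ℝ) (u ux uxx ut : ℝ → ℝ → ℝ)
    (hlam : 0 < lam) (hT : 0 < T)
    (hs : ContDiffOn ℝ 1 s (Set.Icc 0 T))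
    (hspos : ∀ t ∈ Set.Icc (0:ℝ) T, 0 < s t)
    (hu_cont : ContinuousOn (fun p : ℝ × ℝ => u p.1 p.2)
      {p : ℝ × ℝ | 0 ≤ p.1 ∧ p.1 ≤ s p.2 ∧ 0 ≤ p.2 ∧ p.2 ≤ T})
    (hux : ∀ t ∈ Set.Ioc (0:ℝ) T, ∀ x ∈ Set.Ioc (0:ℝ) (s t),
      HasDerivAt (fun y => u y t) (ux x t) x)
    (huxx : ∀ t ∈ Set.Ioc (0:ℝ) T, ∀ x ∈ Set.Ioc (0:ℝ) (s t),
      HasDerivAt (fun y => ux y t) (uxx x t) x)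
    (hux_cont : ContinuousOn (fun p : ℝ × ℝ => ux p.1 p.2)
      {p : ℝ × ℝ | 0 < p.1 ∧ p.1 ≤ s p.2 ∧ 0 < p.2 ∧ p.2 ≤ T})
    (huxx_cont : ContinuousOn (fun p : ℝ × ℝ => uxx p.1 p.2)
      {p : ℝ × ℝ | 0 < p.1 ∧ p.1 ≤ s p.2 ∧ 0 < p.2 ∧ p.2 ≤ T})
    (hut : ∀ t ∈ Set.Ioo (0:ℝ) T, ∀ x ∈ Set.Ioo (0:ℝ) (s t),
      HasDerivAt (fun τ => u x τ) (ut x t) t)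
    (hut_cont : ContinuousOn (fun p : ℝ × ℝ => ut p.1 p.2)
      {p : ℝ × ℝ | 0 < p.1 ∧ p.1 < s p.2 ∧ 0 < p.2 ∧ p.2 < T})
    (hineq : ∀ t ∈ Set.Ioo (0:ℝ) T, ∀ x ∈ Set.Ioo (0:ℝ) (s t),
      0 ≤ -ut x t + uxx x t - lam * u x t)
    (hNeu : ∀ t ∈ Set.Icc (0:ℝ) T, ux (s t) t ≤ 0)
    (hMub : ∀ x t : ℝ, 0 ≤ x → x ≤ s t → 0 ≤ t → t ≤ T → u x t ≤ M)
    (hMatt : ∃ x t : ℝ, 0 ≤ x ∧ x ≤ s t ∧ 0 ≤ t ∧ t ≤ T ∧ u x t = M)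
    (hMpos : 0 < M) :
    ∀ x t : ℝ, 0 ≤ x → x ≤ s t → 0 ≤ t → t ≤ T → u x t = M → x = 0 ∨ t = 0 :=
  stmt_5_general lam T M s u ux uxx ut hlam hs hu_cont hux huxx huxx_cont hut hineq hNeu hMub hMpos
end

section
/- Corner trace of the heat potential: Let φ̃ ∈ C([0,b]) and J₃(x,t) = ∫₀ᵇ [K(x,t;ξ,0) + K(−x,t;ξ,0)] φ̃(ξ) dξ with K the heat kernel. Then J₃(x,t) → φ̃(0) as (x,t) → (0,0) with 0 ≤ x, t > 0. -/
/-!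
The kernel `neumannHeatKernel x t = heatKernel x t + heatKernel (-x) t` is a family of
nonnegative peak functions at `ξ = 0` on `(0, b]`. Its mass there equals the mass of
`heatKernel x t` on `[-b, b]`, which the substitution `ξ = x + 2√t z` turns into
`π^{-1/2} ∫ e^{-z²}` over an interval that exhausts `ℝ` as `x → 0`, `t → 0⁺`; away from `ξ = 0`
it tends to `0` uniformly. The peak-function theorem
`tendsto_setIntegral_peak_smul_of_integrableOn_of_tendsto` then gives the limit `φ 0`.
-/

open Real Set Filter Topology MeasureTheory intervalIntegral

noncomputable def heatKernel (x t ξ : ℝ) : ℝ :=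
  exp (-(x - ξ) ^ 2 / (4 * t)) / (2 * √(π * t))

noncomputable def neumannHeatKernel (x t ξ : ℝ) : ℝ :=
  heatKernel x t ξ + heatKernel (-x) t ξ

lemma heatKernel_nonneg (x t ξ : ℝ) : 0 ≤ heatKernel x t ξ := by
  unfold heatKernel; positivity

lemma neumannHeatKernel_nonneg (x t ξ : ℝ) : 0 ≤ neumannHeatKernel x t ξ :=
  add_nonneg (heatKernel_nonneg x t ξ) (heatKernel_nonneg (-x) t ξ)

lemma continuous_heatKernel (x t : ℝ) : Continuous (heatKernel x t) := by
  unfold heatKernel; fun_prop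

lemma continuous_neumannHeatKernel (x t : ℝ) : Continuous (neumannHeatKernel x t) :=
  (continuous_heatKernel x t).add (continuous_heatKernel (-x) t)

lemma heatKernel_neg (x t ξ : ℝ) : heatKernel (-x) t ξ = heatKernel x t (-ξ) := by
  simp only [heatKernel]
  ring_nf

lemma integral_heatKernel (x : ℝ) {t : ℝ} (ht : 0 < t) (a b : ℝ) :
    ∫ ξ in a..b, heatKernel x t ξ =
      (√π)⁻¹ * ∫ z in (a - x) / (2 * √t)..(b - x) / (2 * √t), exp (-z ^ 2) := by
  have hs : 0 < 2 * √t := by positivity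
  have hsubst := integral_comp_div_sub (fun z => exp (-z ^ 2)) hs.ne' (a := a) (b := b)
    (x / (2 * √t))
  simp only [← sub_div, smul_eq_mul] at hsubst
  have hexp : ∀ ξ, exp (-((ξ - x) / (2 * √t)) ^ 2) = exp (-(x - ξ) ^ 2 / (4 * t)) := by
    intro ξ
    rw [div_pow, mul_pow, sq_sqrt ht.le, ← neg_sub x ξ, neg_sq]
    ring_nf
  simp only [hexp] at hsubst
  simp only [heatKernel, intervalIntegral.integral_div, hsubst, sqrt_mul pi_pos.le]
  field_simp

lemma integral_neumannHeatKernel (x t b : ℝ) :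
    ∫ ξ in 0..b, neumannHeatKernel x t ξ = ∫ ξ in -b..b, heatKernel x t ξ := by
  have hint : ∀ c d, IntervalIntegrable (heatKernel x t) volume c d := fun c d =>
    (continuous_heatKernel x t).intervalIntegrable c d
  have hint_neg : IntervalIntegrable (fun ξ => heatKernel x t (-ξ)) volume 0 b :=
    ((continuous_heatKernel x t).comp continuous_neg).intervalIntegrable 0 b
  simp only [neumannHeatKernel, heatKernel_neg]
  rw [integral_add (hint 0 b) hint_neg, integral_comp_neg, neg_zero, add_comm,
    integral_add_adjacent_intervals (hint _ _) (hint _ _)]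

lemma tendsto_heatKernel_nhdsGT_zero {x ξ : ℝ} (h : x ≠ ξ) :
    Tendsto (fun t => heatKernel x t ξ) (𝓝[>] 0) (𝓝 0) := by
  have ha : 0 < (x - ξ) ^ 2 / 4 := by have := sub_ne_zero.2 h; positivity
  have hdecay := ((tendsto_rpow_mul_exp_neg_mul_atTop_nhds_zero (1 / 2) _ ha).const_mul
    (2 * √π)⁻¹).comp tendsto_inv_nhdsGT_zero
  rw [mul_zero] at hdecay
  refine hdecay.congr' ?_
  filter_upwards [self_mem_nhdsWithin] with t (ht : 0 < t)
  simp only [Function.comp, heatKernel, sqrt_mul pi_pos.le, ← sqrt_eq_rpow, sqrt_inv]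
  field_simp

lemma heatKernel_le_of_le_abs {x t ξ d : ℝ} (ht : 0 < t) (hd : 0 ≤ d) (h : d ≤ |x - ξ|) :
    heatKernel x t ξ ≤ heatKernel d t 0 := by
  unfold heatKernel
  rw [sub_zero]
  gcongr exp (-?_ / _) / _
  simpa [sq_abs] using pow_le_pow_left₀ hd h 2

section Limits

variable {ι : Type*} {l : Filter ι} {x t : ι → ℝ}

lemma tendsto_inv_two_mul_sqrt_atTop (ht : Tendsto t l (𝓝[>] 0)) :
    Tendsto (fun i => (2 * √(t i))⁻¹) l atTop := by
  refine Tendsto.inv_tendsto_nhdsGT_zero (tendsto_nhdsWithin_iff.2 ⟨?_, ?_⟩)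
  · simpa using
      ((continuous_sqrt.tendsto 0).comp (tendsto_nhdsWithin_iff.1 ht).1).const_mul 2
  · filter_upwards [(tendsto_nhdsWithin_iff.1 ht).2] with i hi
    exact mul_pos two_pos (sqrt_pos.2 hi)

lemma tendsto_integral_heatKernel_one [l.IsCountablyGenerated] (hx : Tendsto x l (𝓝 0))
    (ht : Tendsto t l (𝓝[>] 0)) {a b : ℝ} (ha : a < 0) (hb : 0 < b) :
    Tendsto (fun i => ∫ ξ in a..b, heatKernel (x i) (t i) ξ) l (𝓝 1) := by
  have hinv := tendsto_inv_two_mul_sqrt_atTop ht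
  have hlo : Tendsto (fun i => (a - x i) / (2 * √(t i))) l atBot := by
    simpa [div_eq_mul_inv] using
      (tendsto_const_nhds.sub hx).neg_mul_atTop (by simpa using ha) hinv
  have hhi : Tendsto (fun i => (b - x i) / (2 * √(t i))) l atTop := by
    simpa [div_eq_mul_inv] using
      (tendsto_const_nhds.sub hx).pos_mul_atTop (by simpa using hb) hinv
  have hgauss := (intervalIntegral_tendsto_integral
    (by simpa using integrable_exp_neg_mul_sq one_pos) hlo hhi).const_mul (√π)⁻¹
  rw [show ∫ z : ℝ, exp (-z ^ 2) = √π by simpa using integral_gaussian 1,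
    inv_mul_cancel₀ (sqrt_pos.2 pi_pos).ne'] at hgauss
  refine hgauss.congr' ?_
  filter_upwards [(tendsto_nhdsWithin_iff.1 ht).2] with i hi
  exact (integral_heatKernel (x i) hi a b).symm

lemma tendstoUniformlyOn_neumannHeatKernel (hx : Tendsto x l (𝓝 0))
    (ht : Tendsto t l (𝓝[>] 0)) {d : ℝ} (hd : 0 < d) :
    TendstoUniformlyOn (fun i => neumannHeatKernel (x i) (t i)) 0 l (Ici d) := by
  rw [Metric.tendstoUniformlyOn_iff]
  intro ε hε
  have hdecay := (tendsto_heatKernel_nhdsGT_zero (x := d / 2) (ξ := 0) (by positivity)).comp ht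
  filter_upwards [(tendsto_nhdsWithin_iff.1 ht).2,
    hx.eventually (Metric.ball_mem_nhds 0 (half_pos hd)),
    hdecay.eventually (gt_mem_nhds (half_pos hε))] with i hti hxi hKi ξ (hξ : d ≤ ξ)
  rw [Real.dist_eq, sub_zero, abs_lt] at hxi
  have hK₁ : heatKernel (x i) (t i) ξ ≤ heatKernel (d / 2) (t i) 0 :=
    heatKernel_le_of_le_abs hti (by positivity)
      (by rw [abs_sub_comm]; exact le_abs.2 (Or.inl (by linarith)))
  have hK₂ : heatKernel (-x i) (t i) ξ ≤ heatKernel (d / 2) (t i) 0 :=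
    heatKernel_le_of_le_abs hti (by positivity)
      (by rw [abs_sub_comm]; exact le_abs.2 (Or.inl (by linarith)))
  rw [Pi.zero_apply, dist_zero_left, Real.norm_of_nonneg (neumannHeatKernel_nonneg _ _ _)]
  simp only [Function.comp] at hKi
  unfold neumannHeatKernel
  linarith

theorem tendsto_integral_neumannHeatKernel_mul [l.IsCountablyGenerated]
    (hx : Tendsto x l (𝓝 0)) (ht : Tendsto t l (𝓝[>] 0)) {b : ℝ} (hb : 0 < b) {φ : ℝ → ℝ}
    (hφ : ContinuousOn φ (Icc 0 b)) :
    Tendsto (fun i => ∫ ξ in 0..b, neumannHeatKernel (x i) (t i) ξ * φ ξ) l (𝓝 (φ 0)) := by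
  have hmass :
      Tendsto (fun i => ∫ ξ in Ioc 0 b, neumannHeatKernel (x i) (t i) ξ) l (𝓝 1) := by
    simpa only [← integral_of_le hb.le, integral_neumannHeatKernel] using
      tendsto_integral_heatKernel_one hx ht (neg_neg_of_pos hb) hb
  have hconcentrate : ∀ u : Set ℝ, IsOpen u → 0 ∈ u →
      TendstoUniformlyOn (fun i => neumannHeatKernel (x i) (t i)) 0 l (Ioc 0 b \ u) := by
    intro u hu h0u
    obtain ⟨d, hd, hball⟩ := Metric.isOpen_iff.1 hu 0 h0u
    refine (tendstoUniformlyOn_neumannHeatKernel hx ht hd).mono fun ξ ⟨hξ, hξu⟩ => ?_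
    have hξ_ball : ξ ∉ Metric.ball 0 d := fun h => hξu (hball h)
    rw [Metric.mem_ball, Real.dist_eq, sub_zero, abs_of_pos hξ.1, not_lt] at hξ_ball
    exact hξ_ball
  have hpeak := tendsto_setIntegral_peak_smul_of_integrableOn_of_tendsto measurableSet_Ioc
    measurableSet_Ioc subset_rfl self_mem_nhdsWithin measure_Ioc_lt_top.ne
    (Eventually.of_forall fun _ _ _ => neumannHeatKernel_nonneg _ _ _) hconcentrate hmass
    (Eventually.of_forall fun _ => (continuous_neumannHeatKernel _ _).aestronglyMeasurable)
    (hφ.integrableOn_Icc.mono_set Ioc_subset_Icc_self)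
    ((hφ 0 ⟨le_rfl, hb.le⟩).mono Ioc_subset_Icc_self)
  simpa only [integral_of_le hb.le, smul_eq_mul] using hpeak

end Limits

theorem stmt_14 (b : ℝ) (φ : ℝ → ℝ) (hb : 0 < b)
    (hφ : ContinuousOn φ (Set.Icc 0 b)) :
    Filter.Tendsto
      (fun p : ℝ × ℝ => ∫ ξ in (0:ℝ)..b,
        (Real.exp (-(p.1 - ξ)^2 / (4 * p.2)) / (2 * Real.sqrt (Real.pi * p.2)) +
         Real.exp (-(-p.1 - ξ)^2 / (4 * p.2)) / (2 * Real.sqrt (Real.pi * p.2))) * φ ξ)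
      (nhdsWithin (0, 0) {p : ℝ × ℝ | 0 ≤ p.1 ∧ 0 < p.2})
      (nhds (φ 0)) := by
  have hx : Tendsto Prod.fst (𝓝[{p : ℝ × ℝ | 0 ≤ p.1 ∧ 0 < p.2}] (0, 0)) (𝓝 0) :=
    continuousWithinAt_fst
  have ht : Tendsto Prod.snd (𝓝[{p : ℝ × ℝ | 0 ≤ p.1 ∧ 0 < p.2}] (0, 0)) (𝓝[>] 0) :=
    tendsto_nhdsWithin_of_tendsto_nhds_of_eventually_within _ continuousWithinAt_snd
      (eventually_nhdsWithin_of_forall fun p hp => hp.2)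
  exact tendsto_integral_neumannHeatKernel_mul hx ht hb hφ
end

section
/- Kernel bound along a C¹ free boundary: Let s ∈ C¹([0,T]) with 1/C₂ ≤ s(t) ≤ C₂ and |s′(t)| ≤ C₁ on [0,T]. Let N_x(x,t;ξ,τ) denote the x-derivative of N(x,t;ξ,τ) = K(x,t;ξ,τ) + K(−x,t;ξ,τ), K the heat kernel. Then for all 0 ≤ τ < t ≤ T: |N_x(s(t),t;s(τ),τ)| ≤ (C₁/2 + C₂³)/(2√(t−τ)). -/
/-! The kernel splits as `∂ₓK(s(t) - s(τ)) + ∂ₓK(s(t) + s(τ))`. In the first term the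
mean value theorem makes the numerator `O(t - τ)`, and the Gaussian factor is at most `1`.
In the second the argument stays in `[2/C₂, 2C₂]`, away from `0`, so the Gaussian factor
`exp (-y² / (4(t - τ)))` is at most `4(t - τ) / y²` (from `exp z ≥ z`), which absorbs one
power of `t - τ`. -/

open Real

/-- `∂ₓ` of the heat kernel `(4π d)^{-1/2} exp (-(x - ξ)² / (4d))`, as a function of
`y = x - ξ` and of the elapsed time `d = t - τ`. -/
noncomputable def heatKernelDeriv (y d : ℝ) : ℝ :=
  -(y / (4 * √π * d ^ ((3 : ℝ) / 2))) * exp (-y ^ 2 / (4 * d))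

lemma exp_neg_le_inv {y : ℝ} (hy : 0 < y) : exp (-y) ≤ y⁻¹ := by
  rw [exp_neg]
  exact inv_anti₀ hy (by linarith [add_one_le_exp y])

lemma one_le_sqrt_pi : 1 ≤ √π := by
  rw [one_le_sqrt]
  linarith [pi_gt_three]

lemma abs_heatKernelDeriv {d : ℝ} (hd : 0 < d) (y : ℝ) :
    |heatKernelDeriv y d| = |y| / (4 * √π * (d * √d)) * exp (-y ^ 2 / (4 * d)) := by
  have h32 : d ^ ((3 : ℝ) / 2) = d * √d := by
    rw [show (3 : ℝ) / 2 = 1 + 1 / 2 by norm_num, rpow_add hd, rpow_one, ← sqrt_eq_rpow]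
  rw [heatKernelDeriv, h32, abs_mul, abs_neg, abs_div, abs_of_pos (exp_pos _),
    abs_of_pos (by positivity : 0 < 4 * √π * (d * √d))]

lemma abs_heatKernelDeriv_le_of_abs_le {y d L : ℝ} (hd : 0 < d) (hy : |y| ≤ L * d) :
    |heatKernelDeriv y d| ≤ L / (4 * √d) := by
  have hexp : exp (-y ^ 2 / (4 * d)) ≤ 1 :=
    exp_le_one_iff.mpr (div_nonpos_of_nonpos_of_nonneg (by nlinarith) (by linarith))
  have hL : 0 ≤ L := nonneg_of_mul_nonneg_left ((abs_nonneg y).trans hy) hd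
  calc |heatKernelDeriv y d|
      ≤ L * d / (4 * 1 * (d * √d)) * 1 := by
        rw [abs_heatKernelDeriv hd]
        gcongr
        exact one_le_sqrt_pi
    _ = L / (4 * √d) := by field_simp

lemma abs_heatKernelDeriv_le_of_le_abs {y d a b : ℝ} (hd : 0 < d) (ha : 0 < a)
    (hay : a ≤ |y|) (hyb : |y| ≤ b) :
    |heatKernelDeriv y d| ≤ b / (a ^ 2 * √d) := by
  have hexp : exp (-y ^ 2 / (4 * d)) ≤ 4 * d / a ^ 2 :=
    calc exp (-y ^ 2 / (4 * d))
        ≤ exp (-(a ^ 2 / (4 * d))) := by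
          rw [exp_le_exp, neg_div, neg_le_neg_iff, ← sq_abs y]
          gcongr
      _ ≤ 4 * d / a ^ 2 := by
          simpa only [inv_div] using exp_neg_le_inv (by positivity : 0 < a ^ 2 / (4 * d))
  calc |heatKernelDeriv y d|
      ≤ b / (4 * 1 * (d * √d)) * (4 * d / a ^ 2) := by
        rw [abs_heatKernelDeriv hd]
        have hb : 0 ≤ b := ha.le.trans (hay.trans hyb)
        gcongr
        exact one_le_sqrt_pi
    _ = b / (a ^ 2 * √d) := by field_simp

theorem stmt_15_general (T C₁ C₂ : ℝ) (s s' : ℝ → ℝ)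
    (hC₂ : 0 < C₂)
    (hderiv : ∀ t ∈ Set.Icc (0:ℝ) T, HasDerivAt s (s' t) t)
    (hs'bd : ∀ t ∈ Set.Icc (0:ℝ) T, |s' t| ≤ C₁)
    (hsbd : ∀ t ∈ Set.Icc (0:ℝ) T, 1 / C₂ ≤ s t ∧ s t ≤ C₂) :
    ∀ t τ : ℝ, 0 ≤ τ → τ < t → t ≤ T →
      |(-((s t - s τ) / (4 * Real.sqrt Real.pi * (t - τ) ^ ((3:ℝ)/2))) *
          Real.exp (-(s t - s τ)^2 / (4 * (t - τ))) +
        -((s t + s τ) / (4 * Real.sqrt Real.pi * (t - τ) ^ ((3:ℝ)/2))) *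
          Real.exp (-(s t + s τ)^2 / (4 * (t - τ))))|
        ≤ (C₁ / 2 + C₂^3) / (2 * Real.sqrt (t - τ)) := by
  intro t τ hτ ht htT
  have hsub : Set.Icc τ t ⊆ Set.Icc 0 T := Set.Icc_subset_Icc hτ htT
  have hd : 0 < t - τ := sub_pos.mpr ht
  have hlip : |s t - s τ| ≤ C₁ * (t - τ) :=
    norm_image_sub_le_of_norm_deriv_le_segment'
      (fun x hx => (hderiv x (hsub hx)).hasDerivWithinAt)
      (fun x hx => hs'bd x (hsub (Set.Ico_subset_Icc_self hx))) t ⟨ht.le, le_rfl⟩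
  obtain ⟨hst₁, hst₂⟩ := hsbd t (hsub ⟨ht.le, le_rfl⟩)
  obtain ⟨hsτ₁, hsτ₂⟩ := hsbd τ (hsub ⟨le_rfl, ht.le⟩)
  have hpos : 0 < 1 / C₂ := by positivity
  have hsum : |s t + s τ| = s t + s τ := abs_of_pos (by linarith)
  have hlow : 2 / C₂ ≤ |s t + s τ| := by linarith [add_div 1 1 C₂]
  calc |heatKernelDeriv (s t - s τ) (t - τ) + heatKernelDeriv (s t + s τ) (t - τ)|
      ≤ C₁ / (4 * √(t - τ)) + 2 * C₂ / ((2 / C₂) ^ 2 * √(t - τ)) :=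
        (abs_add_le _ _).trans <| add_le_add (abs_heatKernelDeriv_le_of_abs_le hd hlip)
          (abs_heatKernelDeriv_le_of_le_abs hd (by positivity) hlow (by linarith))
    _ = (C₁ / 2 + C₂ ^ 3) / (2 * √(t - τ)) := by
        field_simp
        ring

theorem stmt_15 (T C₁ C₂ : ℝ) (s s' : ℝ → ℝ)
    (hT : 0 < T) (hC₂ : 0 < C₂)
    (hderiv : ∀ t ∈ Set.Icc (0:ℝ) T, HasDerivAt s (s' t) t)
    (hs'cont : ContinuousOn s' (Set.Icc 0 T))
    (hs'bd : ∀ t ∈ Set.Icc (0:ℝ) T, |s' t| ≤ C₁)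
    (hsbd : ∀ t ∈ Set.Icc (0:ℝ) T, 1 / C₂ ≤ s t ∧ s t ≤ C₂) :
    ∀ t τ : ℝ, 0 ≤ τ → τ < t → t ≤ T →
      |(-((s t - s τ) / (4 * Real.sqrt Real.pi * (t - τ) ^ ((3:ℝ)/2))) *
          Real.exp (-(s t - s τ)^2 / (4 * (t - τ))) +
        -((s t + s τ) / (4 * Real.sqrt Real.pi * (t - τ) ^ ((3:ℝ)/2))) *
          Real.exp (-(s t + s τ)^2 / (4 * (t - τ))))|
        ≤ (C₁ / 2 + C₂^3) / (2 * Real.sqrt (t - τ)) :=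
  stmt_15_general T C₁ C₂ s s' hC₂ hderiv hs'bd hsbd
end

section
/- C² regularity of the free boundary: Let (u, s) be a classical solution of Problem P on [0,∞) (so u_t = u_{xx} − λu for 0 < x < s(t), s′(t) = ∫₀^{s(t)}(u(x,t) − σ̃)dx, u_x(s(t),t) = 0, and u_t is continuous up to the boundary for t > 0). Then s ∈ C²((0,∞)) and s″(t) = [u(s(t),t) − σ̃ − λ]·s′(t) − u_x(0,t) − λσ̃·s(t). -/
/-!
Differentiating `s' t = ∫₀^{s t} u x t dx - σ s t` with the Leibniz rule for a moving endpoint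
gives `s'' = u(s, t) s' + ∫₀^{s} u_t - σ s'`. Integrating `u_t = u_xx - λ u` and using
`u_x(s, t) = 0` turns `∫₀^{s} u_t` into `-u_x(0, t) - λ ∫₀^{s} u = -u_x(0, t) - λ (s' + σ s)`.

The Leibniz rule is proved after the substitution `x = s(t) y`, which moves the integral to the
fixed interval `[0, 1]`: there the `t`-derivative of the integrand is continuous on a compact set,
so one may differentiate under the integral sign, and the boundary term `u(s, t) s'` appears as
`∫₀¹ ∂_y (y u(s y, t)) dy`.
-/

open MeasureTheory Set Filter Topology

def regionBelow (s : ℝ → ℝ) (T : Set ℝ) : Set (ℝ × ℝ) :=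
  {p | 0 ≤ p.1 ∧ p.1 ≤ s p.2 ∧ p.2 ∈ T}

theorem eventually_strictly_below_graph {s : ℝ → ℝ} {T : Set ℝ} (hT : IsOpen T) {x t : ℝ}
    (ht : t ∈ T) (hs : ContinuousAt s t) (hx : x ∈ Ioo 0 (s t)) :
    ∀ᶠ p : ℝ × ℝ in 𝓝 (x, t), p.1 ∈ Ioo 0 (s p.2) ∧ p.2 ∈ T := by
  have h0 : ∀ᶠ p : ℝ × ℝ in 𝓝 (x, t), 0 < p.1 :=
    continuousAt_const.eventually_lt continuousAt_fst hx.1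
  have hlt : ∀ᶠ p : ℝ × ℝ in 𝓝 (x, t), p.1 < s p.2 :=
    continuousAt_fst.eventually_lt (hs.comp continuousAt_snd) hx.2
  have hT' : ∀ᶠ p : ℝ × ℝ in 𝓝 (x, t), p.2 ∈ T :=
    continuousAt_snd.preimage_mem_nhds (hT.mem_nhds ht)
  filter_upwards [h0, hlt, hT'] with p h0 hlt hT' using ⟨⟨h0, hlt⟩, hT'⟩

theorem HasDerivAt.comp_curve_of_partials {u ux ut : ℝ → ℝ → ℝ} {c : ℝ → ℝ} {c' t₀ : ℝ}
    (hc : HasDerivAt c c' t₀)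
    (hux : ∀ᶠ p : ℝ × ℝ in 𝓝 (c t₀, t₀), HasDerivAt (u · p.2) (ux p.1 p.2) p.1)
    (hut : ∀ᶠ p : ℝ × ℝ in 𝓝 (c t₀, t₀), HasDerivAt (u p.1 ·) (ut p.1 p.2) p.2)
    (hux_cont : ContinuousAt ↿ux (c t₀, t₀)) (hut_cont : ContinuousAt ↿ut (c t₀, t₀)) :
    HasDerivAt (fun τ => u (c τ) τ) (ux (c t₀) t₀ * c' + ut (c t₀) t₀) t₀ := by
  have hsmul : Continuous fun a : ℝ => (1 : ℝ →L[ℝ] ℝ).smulRight a :=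
    (ContinuousLinearMap.smulRightL ℝ ℝ ℝ 1).continuous
  have hF := hasStrictFDerivAt_uncurry_coprod (f := u)
    (f₁ := fun x t => (1 : ℝ →L[ℝ] ℝ).smulRight (ux x t))
    (f₂ := fun x t => (1 : ℝ →L[ℝ] ℝ).smulRight (ut x t))
    (hux.mono fun p hp => hp.hasFDerivAt) (hut.mono fun p hp => hp.hasFDerivAt)
    (hsmul.continuousAt.comp hux_cont) (hsmul.continuousAt.comp hut_cont)
  refine (hF.hasFDerivAt.comp_hasDerivAt (x := t₀) (f := fun τ => (c τ, τ))
    (hc.prodMk (hasDerivAt_id t₀))).congr_deriv ?_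
  simp [Function.HasUncurry.uncurry, mul_comm]

theorem hasDerivAt_intervalIntegral_of_continuousOn {F F' : ℝ → ℝ → ℝ} {a b t₀ ε : ℝ}
    (hab : a ≤ b) (hε : 0 < ε)
    (hF : ∀ τ ∈ Metric.ball t₀ ε, ContinuousOn (F τ) (Icc a b))
    (hF' : ContinuousOn ↿F' (Metric.closedBall t₀ ε ×ˢ Icc a b))
    (hderiv : ∀ τ ∈ Metric.ball t₀ ε, ∀ y ∈ Ioo a b, HasDerivAt (F · y) (F' τ y) τ) :
    HasDerivAt (fun τ => ∫ y in a..b, F τ y) (∫ y in a..b, F' t₀ y) t₀ := by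
  obtain ⟨C, hC⟩ :=
    ((isCompact_closedBall t₀ ε).prod isCompact_Icc).exists_bound_of_continuousOn hF'
  have hIoc : uIoc a b = Ioc a b := uIoc_of_le hab
  have hF'₀ : ContinuousOn (F' t₀) (Icc a b) :=
    hF'.comp (continuous_const.prodMk continuous_id).continuousOn fun _ hy =>
      ⟨Metric.mem_closedBall_self hε.le, hy⟩
  refine (intervalIntegral.hasDerivAt_integral_of_dominated_loc_of_deriv_le
    (bound := fun _ => C) (Metric.ball_mem_nhds t₀ hε) ?_ ?_ ?_ ?_ intervalIntegrable_const ?_).2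
  · filter_upwards [Metric.ball_mem_nhds t₀ hε] with τ hτ
    rw [hIoc]
    exact ((hF τ hτ).mono Ioc_subset_Icc_self).aestronglyMeasurable measurableSet_Ioc
  · exact (hF t₀ (Metric.mem_ball_self hε)).intervalIntegrable_of_Icc hab
  · rw [hIoc]
    exact (hF'₀.mono Ioc_subset_Icc_self).aestronglyMeasurable measurableSet_Ioc
  · refine ae_of_all _ fun y hy τ hτ => hC (τ, y) ⟨Metric.ball_subset_closedBall hτ, ?_⟩
    rw [hIoc] at hy
    exact Ioc_subset_Icc_self hy
  · filter_upwards [volume.ae_ne b] with y hyb hy τ hτ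
    rw [hIoc] at hy
    exact hderiv τ hτ y ⟨hy.1, hy.2.lt_of_ne hyb⟩

theorem integral_comp_mul_add_id_mul_deriv {v v' : ℝ → ℝ} {S : ℝ} (hS : 0 ≤ S)
    (hv : ∀ x ∈ Icc 0 S, HasDerivAt v (v' x) x) (hv' : ContinuousOn v' (Icc 0 S)) :
    ∫ y in (0:ℝ)..1, (v (S * y) + y * (v' (S * y) * S)) = v S := by
  have hmaps : MapsTo (S * ·) (Icc (0:ℝ) 1) (Icc 0 S) := fun y hy =>
    ⟨mul_nonneg hS hy.1, mul_le_of_le_one_right hS hy.2⟩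
  have hvc : ContinuousOn v (Icc 0 S) := fun x hx => (hv x hx).continuousAt.continuousWithinAt
  have hcont : ContinuousOn (fun y => v (S * y) + y * (v' (S * y) * S)) (Icc 0 1) :=
    (hvc.comp (continuousOn_const.mul continuousOn_id) hmaps).add
      (continuousOn_id.mul ((hv'.comp (continuousOn_const.mul continuousOn_id) hmaps).mul
        continuousOn_const))
  have := intervalIntegral.integral_eq_sub_of_hasDerivAt (f := fun y => y * v (S * y))
    (fun y hy => ?_) (hcont.intervalIntegrable_of_Icc zero_le_one)
  · simpa using this
  rw [uIcc_of_le zero_le_one] at hy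
  exact ((hasDerivAt_id' y).fun_mul ((hv _ (hmaps hy)).comp y
    ((hasDerivAt_id' y).const_mul S))).congr_deriv (by simp [mul_comm])

theorem ContinuousOn.slice_regionBelow {v : ℝ → ℝ → ℝ} {s : ℝ → ℝ} {T : Set ℝ} {t : ℝ}
    (hv : ContinuousOn ↿v (regionBelow s T)) (ht : t ∈ T) :
    ContinuousOn (v · t) (Icc 0 (s t)) :=
  hv.comp (continuous_id.prodMk continuous_const).continuousOn fun _ hx => ⟨hx.1, hx.2, ht⟩

theorem integral_rescaled_leibniz_integrand {v vx w : ℝ → ℝ} {S a : ℝ} (hS : 0 ≤ S)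
    (hv : ∀ x ∈ Icc 0 S, HasDerivAt v (vx x) x) (hvx : ContinuousOn vx (Icc 0 S))
    (hw : ContinuousOn w (Icc 0 S)) :
    ∫ y in (0:ℝ)..1, (a * (v (S * y) + y * (vx (S * y) * S)) + S * w (S * y)) =
      v S * a + ∫ x in 0..S, w x := by
  have hmaps : MapsTo (S * ·) (Icc (0:ℝ) 1) (Icc 0 S) := fun y hy =>
    ⟨mul_nonneg hS hy.1, mul_le_of_le_one_right hS hy.2⟩
  have hvc : ContinuousOn v (Icc 0 S) := fun x hx => (hv x hx).continuousAt.continuousWithinAt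
  have hmul : ContinuousOn (S * ·) (Icc (0:ℝ) 1) := continuousOn_const.mul continuousOn_id
  have hAi : IntervalIntegrable (fun y => a * (v (S * y) + y * (vx (S * y) * S))) volume 0 1 :=
    (continuousOn_const.mul ((hvc.comp hmul hmaps).add (continuousOn_id.mul
      ((hvx.comp hmul hmaps).mul continuousOn_const)))).intervalIntegrable_of_Icc zero_le_one
  have hBi : IntervalIntegrable (fun y => S * w (S * y)) volume 0 1 :=
    (continuousOn_const.mul (hw.comp hmul hmaps)).intervalIntegrable_of_Icc zero_le_one
  have hB : ∫ y in (0:ℝ)..1, S * w (S * y) = ∫ x in 0..S, w x := by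
    simp [intervalIntegral.integral_const_mul]
  rw [intervalIntegral.integral_add hAi hBi, intervalIntegral.integral_const_mul,
    integral_comp_mul_add_id_mul_deriv hS hv hvx, hB, mul_comm]

theorem hasDerivAt_integral_rescaled {s s' : ℝ → ℝ} {u ux ut : ℝ → ℝ → ℝ} {T : Set ℝ}
    {t₀ : ℝ} (hT : IsOpen T) (ht₀ : t₀ ∈ T) (hs : ∀ t ∈ T, HasDerivAt s (s' t) t)
    (hs' : ContinuousOn s' T) (hspos : ∀ t ∈ T, 0 < s t)
    (hu : ContinuousOn ↿u (regionBelow s T))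
    (hux : ∀ p ∈ regionBelow s T, HasDerivAt (u · p.2) (ux p.1 p.2) p.1)
    (hux_cont : ContinuousOn ↿ux (regionBelow s T))
    (hut : ∀ t ∈ T, ∀ x ∈ Ioo 0 (s t), HasDerivAt (u x ·) (ut x t) t)
    (hut_cont : ContinuousOn ↿ut (regionBelow s T)) :
    HasDerivAt (fun τ => ∫ y in 0..1, s τ * u (s τ * y) τ)
      (∫ y in 0..1, (s' t₀ * (u (s t₀ * y) t₀ + y * (ux (s t₀ * y) t₀ * s t₀)) +
        s t₀ * ut (s t₀ * y) t₀)) t₀ := by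
  obtain ⟨ε, hε, hεT⟩ := Metric.nhds_basis_closedBall.mem_iff.1 (hT.mem_nhds ht₀)
  have hsT : ContinuousOn s T := fun t ht => (hs t ht).continuousAt.continuousWithinAt
  have hsc : ContinuousOn (fun p : ℝ × ℝ => s p.1) (T ×ˢ Icc 0 1) :=
    hsT.comp continuousOn_fst fun _ hp => hp.1
  have hs'c : ContinuousOn (fun p : ℝ × ℝ => s' p.1) (T ×ˢ Icc 0 1) :=
    hs'.comp continuousOn_fst fun _ hp => hp.1
  have hmaps : MapsTo (fun p : ℝ × ℝ => (s p.1 * p.2, p.1)) (T ×ˢ Icc 0 1) (regionBelow s T) :=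
    fun p ⟨hp, hy⟩ => ⟨mul_nonneg (hspos _ hp).le hy.1,
      mul_le_of_le_one_right (hspos _ hp).le hy.2, hp⟩
  have hφ : ContinuousOn (fun p : ℝ × ℝ => (s p.1 * p.2, p.1)) (T ×ˢ Icc 0 1) :=
    (hsc.mul continuousOn_snd).prodMk continuousOn_fst
  refine hasDerivAt_intervalIntegral_of_continuousOn (F := fun τ y => s τ * u (s τ * y) τ)
    (F' := fun τ y => s' τ * (u (s τ * y) τ + y * (ux (s τ * y) τ * s τ)) + s τ * ut (s τ * y) τ)
    zero_le_one hε (fun τ hτ => (hsc.mul (hu.comp hφ hmaps)).comp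
      (continuousOn_const.prodMk continuousOn_id)
      fun y hy => ⟨hεT (Metric.ball_subset_closedBall hτ), hy⟩)
    (ContinuousOn.mono ((hs'c.mul ((hu.comp hφ hmaps).add (continuousOn_snd.mul
      ((hux_cont.comp hφ hmaps).mul hsc)))).add (hsc.mul (hut_cont.comp hφ hmaps)))
      (prod_mono hεT subset_rfl)) fun τ hτ y hy => ?_
  have hτT : τ ∈ T := hεT (Metric.ball_subset_closedBall hτ)
  have hsτ := hspos τ hτT
  have hnear := eventually_strictly_below_graph hT hτT (hs τ hτT).continuousAt
    (x := s τ * y) ⟨mul_pos hsτ hy.1, mul_lt_of_lt_one_right hsτ hy.2⟩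
  have hreg : regionBelow s T ∈ 𝓝 (s τ * y, τ) :=
    mem_of_superset hnear fun p hp => ⟨hp.1.1.le, hp.1.2.le, hp.2⟩
  have hcurve := HasDerivAt.comp_curve_of_partials (c := fun τ => s τ * y)
    ((hs τ hτT).mul_const y) (hnear.mono fun p hp => hux p ⟨hp.1.1.le, hp.1.2.le, hp.2⟩)
    (hnear.mono fun p hp => hut p.2 hp.2 p.1 hp.1)
    (hux_cont.continuousAt hreg) (hut_cont.continuousAt hreg)
  exact ((hs τ hτT).mul hcurve).congr_deriv (by ring)

theorem hasDerivAt_intervalIntegral_moving_upper_limit {s s' : ℝ → ℝ} {u ux ut : ℝ → ℝ → ℝ}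
    {T : Set ℝ} {t₀ : ℝ} (hT : IsOpen T) (ht₀ : t₀ ∈ T) (hs : ∀ t ∈ T, HasDerivAt s (s' t) t)
    (hs' : ContinuousOn s' T) (hspos : ∀ t ∈ T, 0 < s t)
    (hu : ContinuousOn ↿u (regionBelow s T))
    (hux : ∀ p ∈ regionBelow s T, HasDerivAt (u · p.2) (ux p.1 p.2) p.1)
    (hux_cont : ContinuousOn ↿ux (regionBelow s T))
    (hut : ∀ t ∈ T, ∀ x ∈ Ioo 0 (s t), HasDerivAt (u x ·) (ut x t) t)
    (hut_cont : ContinuousOn ↿ut (regionBelow s T)) :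
    HasDerivAt (fun t => ∫ x in 0..s t, u x t)
      (u (s t₀) t₀ * s' t₀ + ∫ x in 0..s t₀, ut x t₀) t₀ := by
  have hrescale : (fun t => ∫ x in 0..s t, u x t) = fun τ => ∫ y in 0..1, s τ * u (s τ * y) τ := by
    funext τ
    simpa [intervalIntegral.integral_const_mul] using
      (intervalIntegral.smul_integral_comp_mul_left (a := 0) (b := 1) (u · τ) (s τ)).symm
  rw [hrescale]
  exact (hasDerivAt_integral_rescaled hT ht₀ hs hs' hspos hu hux hux_cont hut hut_cont).congr_deriv
    (integral_rescaled_leibniz_integrand (v := (u · t₀)) (hspos t₀ ht₀).le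
      (fun x hx => hux (x, t₀) ⟨hx.1, hx.2, ht₀⟩) (hux_cont.slice_regionBelow ht₀)
      (hut_cont.slice_regionBelow ht₀))

theorem integral_eq_sub_of_eq_deriv_sub_mul {v vx vxx w : ℝ → ℝ} {S lam : ℝ} (hS : 0 ≤ S)
    (hv : ContinuousOn v (Icc 0 S)) (hvx : ContinuousOn vx (Icc 0 S))
    (hw : ContinuousOn w (Icc 0 S)) (hvxx : ∀ x ∈ Ioo 0 S, HasDerivAt vx (vxx x) x)
    (heq : ∀ x ∈ Ioo 0 S, w x = vxx x - lam * v x) :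
    ∫ x in 0..S, w x = vx S - vx 0 - lam * ∫ x in 0..S, v x := by
  have hvi := hv.intervalIntegrable_of_Icc (μ := volume) hS
  have hwi := hw.intervalIntegrable_of_Icc (μ := volume) hS
  have hftc := intervalIntegral.integral_eq_sub_of_hasDeriv_right_of_le hS hvx
    (fun x hx => ((hvxx x hx).congr_deriv (by linarith [heq x hx])).hasDerivWithinAt)
    (hwi.add (hvi.const_mul lam))
  rw [intervalIntegral.integral_add hwi (hvi.const_mul lam),
    intervalIntegral.integral_const_mul] at hftc
  linarith

theorem stmt_17_general (lam σ : ℝ) (s s' : ℝ → ℝ) (u ux uxx ut : ℝ → ℝ → ℝ)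
    (hspos : ∀ t : ℝ, 0 ≤ t → 0 < s t)
    (hsderiv : ∀ t : ℝ, 0 ≤ t → HasDerivAt s (s' t) t)
    (hs'cont : ContinuousOn s' (Set.Ici 0))
    (hu_cont : ContinuousOn (fun p : ℝ × ℝ => u p.1 p.2)
      {p : ℝ × ℝ | 0 ≤ p.1 ∧ p.1 ≤ s p.2 ∧ 0 ≤ p.2})
    (hux : ∀ t : ℝ, 0 < t → ∀ x : ℝ, 0 ≤ x → x ≤ s t →
      HasDerivAt (fun y => u y t) (ux x t) x)
    (hux_cont : ContinuousOn (fun p : ℝ × ℝ => ux p.1 p.2)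
      {p : ℝ × ℝ | 0 ≤ p.1 ∧ p.1 ≤ s p.2 ∧ 0 < p.2})
    (huxx : ∀ t : ℝ, 0 < t → ∀ x : ℝ, 0 < x → x < s t →
      HasDerivAt (fun y => ux y t) (uxx x t) x)
    (hut : ∀ t : ℝ, 0 < t → ∀ x : ℝ, 0 < x → x < s t →
      HasDerivAt (fun τ => u x τ) (ut x t) t)
    -- u_t is continuous up to the boundary for t > 0
    (hut_cont : ContinuousOn (fun p : ℝ × ℝ => ut p.1 p.2)
      {p : ℝ × ℝ | 0 ≤ p.1 ∧ p.1 ≤ s p.2 ∧ 0 < p.2})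
    (heq : ∀ t : ℝ, 0 < t → ∀ x : ℝ, 0 < x → x < s t →
      ut x t = uxx x t - lam * u x t)
    (hNeu : ∀ t : ℝ, 0 < t → ux (s t) t = 0)
    (hfb : ∀ t : ℝ, 0 ≤ t → s' t = ∫ x in (0:ℝ)..s t, (u x t - σ)) :
    (∀ t : ℝ, 0 < t →
      HasDerivAt s' ((u (s t) t - σ - lam) * s' t - ux 0 t - lam * σ * s t) t) ∧
    ContinuousOn (fun t => (u (s t) t - σ - lam) * s' t - ux 0 t - lam * σ * s t)
      (Set.Ioi 0) := by
  have hu : ContinuousOn ↿u (regionBelow s (Ioi 0)) :=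
    hu_cont.mono fun p hp => ⟨hp.1, hp.2.1, hp.2.2.le⟩
  have hs'_eq : ∀ t > 0, s' t = (∫ x in 0..s t, u x t) - σ * s t := fun t ht => by
    rw [hfb t ht.le, intervalIntegral.integral_sub
      ((hu.slice_regionBelow ht).intervalIntegrable_of_Icc (hspos t ht.le).le)
      intervalIntegrable_const,
      intervalIntegral.integral_const, smul_eq_mul, sub_zero, mul_comm]
  refine ⟨fun t₀ ht₀ => ?_, ?_⟩
  · have hmass := hasDerivAt_intervalIntegral_moving_upper_limit isOpen_Ioi ht₀
      (fun t ht => hsderiv t (le_of_lt ht)) (hs'cont.mono Ioi_subset_Ici_self)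
      (fun t ht => hspos t (le_of_lt ht)) hu (fun p hp => hux p.2 hp.2.2 p.1 hp.1 hp.2.1)
      hux_cont (fun t ht x hx => hut t ht x hx.1 hx.2) hut_cont
    have hflux := integral_eq_sub_of_eq_deriv_sub_mul (hspos t₀ ht₀.le).le
      (hu.slice_regionBelow ht₀) (hux_cont.slice_regionBelow ht₀)
      (hut_cont.slice_regionBelow ht₀) (fun x hx => huxx t₀ ht₀ x hx.1 hx.2)
      (fun x hx => heq t₀ ht₀ x hx.1 hx.2)
    have hs'' := (hmass.sub ((hsderiv t₀ ht₀.le).const_mul σ)).congr_of_eventuallyEq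
      (eventually_gt_nhds ht₀ |>.mono hs'_eq)
    refine hs''.congr_deriv ?_
    rw [hflux, hNeu t₀ ht₀, hs'_eq t₀ ht₀]
    ring
  · have hsc : ∀ t > 0, ContinuousAt s t := fun t ht => (hsderiv t ht.le).continuousAt
    have hgraph : ContinuousOn (fun t => u (s t) t) (Ioi 0) :=
      hu.comp (continuousOn_of_forall_continuousAt fun t ht => (hsc t ht).prodMk continuousAt_id)
        fun t ht => ⟨(hspos t (le_of_lt ht)).le, le_rfl, ht⟩
    have hflux0 : ContinuousOn (fun t => ux 0 t) (Ioi 0) :=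
      hux_cont.comp (continuous_const.prodMk continuous_id).continuousOn
        fun t ht => ⟨le_rfl, (hspos t (le_of_lt ht)).le, ht⟩
    exact ((((hgraph.sub continuousOn_const).sub continuousOn_const).mul
      (hs'cont.mono Ioi_subset_Ici_self)).sub hflux0).sub
      (continuousOn_const.mul (continuousOn_of_forall_continuousAt hsc))

/-- C² regularity of the free boundary for Problem P on `[0,∞)`. -/
theorem stmt_17 (lam σ b : ℝ) (s s' : ℝ → ℝ) (u ux uxx ut : ℝ → ℝ → ℝ)
    (hlam : 0 < lam) (hσ : 0 < σ) (hb : 0 < b) (hs0 : s 0 = b)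
    (hspos : ∀ t : ℝ, 0 ≤ t → 0 < s t)
    (hsderiv : ∀ t : ℝ, 0 ≤ t → HasDerivAt s (s' t) t)
    (hs'cont : ContinuousOn s' (Set.Ici 0))
    (hu_cont : ContinuousOn (fun p : ℝ × ℝ => u p.1 p.2)
      {p : ℝ × ℝ | 0 ≤ p.1 ∧ p.1 ≤ s p.2 ∧ 0 ≤ p.2})
    (hux : ∀ t : ℝ, 0 < t → ∀ x : ℝ, 0 ≤ x → x ≤ s t →
      HasDerivAt (fun y => u y t) (ux x t) x)
    (hux_cont : ContinuousOn (fun p : ℝ × ℝ => ux p.1 p.2)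
      {p : ℝ × ℝ | 0 ≤ p.1 ∧ p.1 ≤ s p.2 ∧ 0 < p.2})
    (huxx : ∀ t : ℝ, 0 < t → ∀ x : ℝ, 0 < x → x < s t →
      HasDerivAt (fun y => ux y t) (uxx x t) x)
    (hut : ∀ t : ℝ, 0 < t → ∀ x : ℝ, 0 < x → x < s t →
      HasDerivAt (fun τ => u x τ) (ut x t) t)
    -- u_t is continuous up to the boundary for t > 0
    (hut_cont : ContinuousOn (fun p : ℝ × ℝ => ut p.1 p.2)
      {p : ℝ × ℝ | 0 ≤ p.1 ∧ p.1 ≤ s p.2 ∧ 0 < p.2})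
    (heq : ∀ t : ℝ, 0 < t → ∀ x : ℝ, 0 < x → x < s t →
      ut x t = uxx x t - lam * u x t)
    (hNeu : ∀ t : ℝ, 0 < t → ux (s t) t = 0)
    (hfb : ∀ t : ℝ, 0 ≤ t → s' t = ∫ x in (0:ℝ)..s t, (u x t - σ)) :
    (∀ t : ℝ, 0 < t →
      HasDerivAt s' ((u (s t) t - σ - lam) * s' t - ux 0 t - lam * σ * s t) t) ∧
    ContinuousOn (fun t => (u (s t) t - σ - lam) * s' t - ux 0 t - lam * σ * s t)
      (Set.Ioi 0) :=
  stmt_17_general lam σ s s' u ux uxx ut hspos hsderiv hs'cont hu_cont hux hux_cont huxx hut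
    hut_cont heq hNeu hfb
end
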